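/- arXiv:2509.22328 — 4 statements merged into one kernel-verified Lean document; each statement's English description precedes it below -/
import Mathlib

section
/- Let M be a separable metric space with dense sequence S = (s_n), s_1 = 0. For n ∈ ℕ and x ∈ M define i_n(x) = min{k ≤ n : d(x, s_k) = d(x, {s_1,…,s_n})} and r_n(x) = s_{i_n(x)}. If M is ultrametric, then r_n : M → {s_1,…,s_n} is a 1-Lipschitz retraction: r_n(s_k) = s_k for k ≤ n, and d(r_n(x), r_n(y)) ≤ d(x,y) for all x, y ∈ M. -/
/-- The smallest index `k` with `1 ≤ k ≤ n` such that `s k` is a nearest point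
to `x` among `s 1, …, s n`. -/
noncomputable def nearestIdx {M : Type*} [MetricSpace M] (s : ℕ → M) (n : ℕ) (x : M) : ℕ :=
  sInf {k | 1 ≤ k ∧ k ≤ n ∧ ∀ j, 1 ≤ j → j ≤ n → dist x (s k) ≤ dist x (s j)}

/-- The nearest-point retraction `r_n` onto `{s 1, …, s n}`. -/
noncomputable def nearestRetr {M : Type*} [MetricSpace M] (s : ℕ → M) (n : ℕ) (x : M) : M :=
  s (nearestIdx s n x)

/-- In a separable ultrametric space with dense sequence `(s_k)` starting at the base
point, the nearest-point map `r_n` is a `1`-Lipschitz retraction onto `{s 1, …, s n}`. -/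
theorem nearestRetr_retraction_lipschitz {M : Type*} [MetricSpace M]
    (hu : ∀ x y z : M, dist x y ≤ max (dist x z) (dist z y))
    (o : M) (s : ℕ → M) (hs : DenseRange s) (hs1 : s 1 = o)
    (n : ℕ) (hn : 1 ≤ n) :
    (∀ k, 1 ≤ k → k ≤ n → nearestRetr s n (s k) = s k) ∧
    (∀ x y : M, dist (nearestRetr s n x) (nearestRetr s n y) ≤ dist x y) := by
  have key : ∀ x : M, nearestIdx s n x ∈
      {k | 1 ≤ k ∧ k ≤ n ∧ ∀ j, 1 ≤ j → j ≤ n → dist x (s k) ≤ dist x (s j)} := by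
    intro x
    apply Nat.sInf_mem
    obtain ⟨k, hk, hmin⟩ := (Finset.Icc 1 n).exists_min_image (fun j => dist x (s j))
      ⟨1, Finset.mem_Icc.2 ⟨le_refl 1, hn⟩⟩
    exact ⟨k, (Finset.mem_Icc.1 hk).1, (Finset.mem_Icc.1 hk).2,
      fun j h1 h2 => hmin j (Finset.mem_Icc.2 ⟨h1, h2⟩)⟩
  constructor
  · intro k h1 h2
    have h := key (s k)
    have h0 : dist (s k) (s (nearestIdx s n (s k))) ≤ 0 := by
      simpa using h.2.2 k h1 h2
    have : dist (s k) (nearestRetr s n (s k)) = 0 := le_antisymm h0 dist_nonneg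
    exact (dist_eq_zero.1 this).symm
  · -- main lemma under a WLOG hypothesis
    have main : ∀ x y : M, dist y (s (nearestIdx s n y)) ≤ dist x (s (nearestIdx s n x)) →
        dist (s (nearestIdx s n x)) (s (nearestIdx s n y)) ≤ dist x y := by
      intro x y hwlog
      set i := nearestIdx s n x with hi
      set j := nearestIdx s n y with hj
      obtain ⟨hi1, hin, hmx⟩ := key x
      obtain ⟨hj1, hjn, hmy⟩ := key y
      have hxa_le_xb : dist x (s i) ≤ dist x (s j) := hmx j hj1 hjn
      have hxb : dist x (s j) ≤ max (dist x y) (dist y (s j)) := hu x (s j) y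
      by_cases hdb : dist y (s j) ≤ dist x y
      · -- easy case: both nearest distances are ≤ dist x y
        have h1 : dist x (s j) ≤ dist x y := hxb.trans (max_le le_rfl hdb)
        have h2 : dist (s i) (s j) ≤ max (dist (s i) x) (dist x (s j)) := hu (s i) (s j) x
        have h3 : dist (s i) x ≤ dist x y := by
          rw [dist_comm]; exact hxa_le_xb.trans h1
        exact h2.trans (max_le h3 h1)
      · push_neg at hdb
        -- hard case: everything is far; show i = j
        have hxj_le : dist x (s j) ≤ dist y (s j) :=
          hxb.trans (max_le hdb.le le_rfl)
        have hxa_le_yb : dist x (s i) ≤ dist y (s j) := hxa_le_xb.trans hxj_le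
        -- j is a nearest index for x
        have hjx : j ∈ {k | 1 ≤ k ∧ k ≤ n ∧
            ∀ m, 1 ≤ m → m ≤ n → dist x (s k) ≤ dist x (s m)} := by
          refine ⟨hj1, hjn, fun m h1 h2 => ?_⟩
          exact hxj_le.trans (hwlog.trans (hmx m h1 h2))
        have hij : i ≤ j := Nat.sInf_le hjx
        -- i is a nearest index for y
        have hDlt : dist x y < dist x (s i) := lt_of_lt_of_le hdb hwlog
        have hyi : dist y (s i) ≤ dist x (s i) := by
          have := hu y (s i) x
          rw [dist_comm y x] at this
          exact this.trans (max_le hDlt.le le_rfl)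
        have hix : i ∈ {k | 1 ≤ k ∧ k ≤ n ∧
            ∀ m, 1 ≤ m → m ≤ n → dist y (s k) ≤ dist y (s m)} := by
          refine ⟨hi1, hin, fun m h1 h2 => ?_⟩
          exact hyi.trans (hxa_le_yb.trans (hmy m h1 h2))
        have hji : j ≤ i := Nat.sInf_le hix
        have : i = j := le_antisymm hij hji
        rw [this]
        simpa using dist_nonneg
    intro x y
    rcases le_total (dist y (s (nearestIdx s n y))) (dist x (s (nearestIdx s n x))) with h | h
    · exact main x y h
    · have := main y x h
      rw [dist_comm x y, dist_comm (nearestRetr s n x) (nearestRetr s n y)]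
      exact this
end

section
/- With the retractions r_n as above on a separable ultrametric space M (defined via a fixed dense sequence by nearest-point projection with smallest index), one has r_n ∘ r_m = r_{min{n,m}} for all n, m ∈ ℕ. -/
lemma nearestIdx_mem {M : Type*} [MetricSpace M] (s : ℕ → M) (n : ℕ) (hn : 1 ≤ n) (x : M) :
    nearestIdx s n x ∈
      {k | 1 ≤ k ∧ k ≤ n ∧ ∀ j, 1 ≤ j → j ≤ n → dist x (s k) ≤ dist x (s j)} := by
  apply Nat.sInf_mem
  obtain ⟨k, hk, hmin⟩ := (Finset.Icc 1 n).exists_min_image (fun j => dist x (s j))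
    ⟨1, by simp [hn]⟩
  exact ⟨k, (Finset.mem_Icc.mp hk).1, (Finset.mem_Icc.mp hk).2,
    fun j h1 h2 => hmin j (Finset.mem_Icc.mpr ⟨h1, h2⟩)⟩

lemma nearestIdx_self {M : Type*} [MetricSpace M] (s : ℕ → M) (hinj : Function.Injective s)
    (n k : ℕ) (h1 : 1 ≤ k) (h2 : k ≤ n) : nearestIdx s n (s k) = k := by
  have hmem := nearestIdx_mem s n (le_trans h1 h2) (s k)
  have hk : k ∈ {j | 1 ≤ j ∧ j ≤ n ∧
      ∀ j', 1 ≤ j' → j' ≤ n → dist (s k) (s j) ≤ dist (s k) (s j')} := by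
    exact ⟨h1, h2, fun j' _ _ => by simp [dist_nonneg]⟩
  have hle : nearestIdx s n (s k) ≤ k := Nat.sInf_le hk
  have hd : dist (s k) (s (nearestIdx s n (s k))) ≤ dist (s k) (s k) :=
    hmem.2.2 k h1 h2
  rw [dist_self] at hd
  exact (hinj (dist_eq_zero.mp (le_antisymm hd dist_nonneg))).symm

/-- For the nearest-point retractions on a separable ultrametric space with dense
one-to-one sequence `(s_k)`, one has `r_n ∘ r_m = r_{min n m}`. -/
theorem nearestRetr_comp {M : Type*} [MetricSpace M]
    (hu : ∀ x y z : M, dist x y ≤ max (dist x z) (dist z y))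
    (o : M) (s : ℕ → M) (hs : DenseRange s) (hinj : Function.Injective s) (hs1 : s 1 = o)
    (n m : ℕ) (hn : 1 ≤ n) (hm : 1 ≤ m) :
    ∀ x : M, nearestRetr s n (nearestRetr s m x) = nearestRetr s (min n m) x := by
  intro x
  set k := nearestIdx s m x with hkdef
  have hkm := nearestIdx_mem s m hm x
  rcases le_or_gt m n with hmn | hnm
  · -- min n m = m, and r_n (s k) = s k since k ≤ m ≤ n
    rw [min_eq_right hmn]
    show s (nearestIdx s n (s k)) = s k
    rw [nearestIdx_self s hinj n k hkm.1 (le_trans hkm.2.1 hmn)]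
  · -- n < m
    rw [min_eq_left hnm.le]
    set i := nearestIdx s n x with hidef
    have hin := nearestIdx_mem s n hn x
    have hka : dist x (s k) ≤ dist x (s i) :=
      hkm.2.2 i hin.1 (le_trans hin.2.1 hnm.le)
    rcases lt_or_eq_of_le hka with hlt | heq
    · -- strict: distances from s k to s j equal distances from x to s j for j ≤ n
      have hdist : ∀ j, 1 ≤ j → j ≤ n → dist (s k) (s j) = dist x (s j) := by
        intro j h1 h2
        have hxj : dist x (s k) < dist x (s j) :=
          lt_of_lt_of_le hlt (hin.2.2 j h1 h2)
        apply le_antisymm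
        · have := hu (s k) (s j) x
          rw [dist_comm (s k) x] at this
          exact this.trans (max_le hxj.le le_rfl)
        · have := hu x (s j) (s k)
          rcases max_cases (dist x (s k)) (dist (s k) (s j)) with ⟨h, _⟩ | ⟨h, _⟩
          · rw [h] at this; exact absurd this (not_le.mpr hxj)
          · rwa [h] at this
      have hsets : {j | 1 ≤ j ∧ j ≤ n ∧
            ∀ j', 1 ≤ j' → j' ≤ n → dist (s k) (s j) ≤ dist (s k) (s j')} =
          {j | 1 ≤ j ∧ j ≤ n ∧
            ∀ j', 1 ≤ j' → j' ≤ n → dist x (s j) ≤ dist x (s j')} := by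
        ext j
        constructor
        · rintro ⟨h1, h2, h3⟩
          refine ⟨h1, h2, fun j' h1' h2' => ?_⟩
          rw [← hdist j h1 h2, ← hdist j' h1' h2']
          exact h3 j' h1' h2'
        · rintro ⟨h1, h2, h3⟩
          refine ⟨h1, h2, fun j' h1' h2' => ?_⟩
          rw [hdist j h1 h2, hdist j' h1' h2']
          exact h3 j' h1' h2'
      show s (nearestIdx s n (s k)) = s (nearestIdx s n x)
      unfold nearestIdx
      rw [hsets]
    · -- equality case: k = i
      have hiAm : i ∈ {j | 1 ≤ j ∧ j ≤ m ∧
          ∀ j', 1 ≤ j' → j' ≤ m → dist x (s i) ≤ dist x (s j')} := by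
        refine ⟨hin.1, le_trans hin.2.1 hnm.le, fun j' h1 h2 => ?_⟩
        rw [← heq]; exact hkm.2.2 j' h1 h2
      have hki : k ≤ i := Nat.sInf_le hiAm
      have hkn : k ≤ n := le_trans hki hin.2.1
      have hkAn : k ∈ {j | 1 ≤ j ∧ j ≤ n ∧
          ∀ j', 1 ≤ j' → j' ≤ n → dist x (s j) ≤ dist x (s j')} := by
        refine ⟨hkm.1, hkn, fun j' h1 h2 => ?_⟩
        rw [heq]; exact hin.2.2 j' h1 h2
      have hik : i ≤ k := Nat.sInf_le hkAn
      have hk_eq : k = i := le_antisymm hki hik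
      show s (nearestIdx s n (s k)) = s (nearestIdx s n x)
      rw [nearestIdx_self s hinj n k hkm.1 hkn, hk_eq]
end

section
/- Let M = [0,1] ∪ {p} with metric d(x,y) = |x − y| for x,y ∈ [0,1] and d(x,p) = 1/2 for x ∈ [0,1]. Define F : M → ℝ by F(x) = x for x ∈ [0,1] and F(p) = 1/2, and let Q(F) : M → ℝ be the function vanishing on [0,1] with Q(F)(p) = 1/2. Then F is 1-Lipschitz with Lipschitz constant exactly 1, while F − Q(F) has Lipschitz constant exactly 2; in particular Lip(F) < max{Lip(Q(F)), Lip(F − Q(F))}. -/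
/-- The space `M = [0,1] ∪ {p}`: `some a` is `a ∈ [0,1]`, `none` is the extra point `p`. -/
def Mpt : Type := Option (Set.Icc (0 : ℝ) 1)

/-- The metric on `M = [0,1] ∪ {p}`: usual distance on `[0,1]`, and `d(x,p) = 1/2`. -/
noncomputable def dM : Mpt → Mpt → ℝ
  | some a, some b => |a.1 - b.1|
  | some _, none => 1 / 2
  | none, some _ => 1 / 2
  | none, none => 0

/-- `F(x) = x` on `[0,1]`, `F(p) = 1/2`. -/
noncomputable def Fm : Mpt → ℝ
  | some a => a.1
  | none => 1 / 2

/-- `Q F` vanishes on `[0,1]` and `Q F (p) = 1/2`. -/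
noncomputable def QFm : Mpt → ℝ
  | some _ => 0
  | none => 1 / 2

/-- `F` has Lipschitz constant exactly `1`, while `F − Q F` has Lipschitz constant
exactly `2`; in particular `Lip F < max {Lip (Q F), Lip (F − Q F)}`. -/
theorem F_lip_one_F_sub_QF_lip_two :
    (∀ x y : Mpt, |Fm x - Fm y| ≤ 1 * dM x y) ∧
    (∀ K : ℝ, (∀ x y : Mpt, |Fm x - Fm y| ≤ K * dM x y) → 1 ≤ K) ∧
    (∀ x y : Mpt, |(Fm x - QFm x) - (Fm y - QFm y)| ≤ 2 * dM x y) ∧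
    (∀ K : ℝ, (∀ x y : Mpt, |(Fm x - QFm x) - (Fm y - QFm y)| ≤ K * dM x y) → 2 ≤ K) := by
  refine ⟨?_, ?_, ?_, ?_⟩
  · rintro (_|a) (_|b) <;> simp only [Fm, dM, one_mul]
    · norm_num
    · rw [abs_sub_comm]; rw [abs_le]; constructor <;> nlinarith [b.2.1, b.2.2, abs_nonneg ((b:ℝ) - 1/2)]
    · rw [abs_le]; constructor <;> nlinarith [a.2.1, a.2.2]
    · exact le_refl _
  · intro K h
    have := h (some ⟨1, by norm_num⟩) (some ⟨0, by norm_num⟩)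
    simp only [Fm, dM] at this
    norm_num at this
    linarith
  · rintro (_|a) (_|b) <;> simp only [Fm, QFm, dM]
    · norm_num
    · rw [abs_le]; constructor <;> nlinarith [b.2.1, b.2.2]
    · rw [abs_le]; constructor <;> nlinarith [a.2.1, a.2.2]
    · simp only [sub_zero]
      nlinarith [abs_nonneg ((a:ℝ) - b)]
  · intro K h
    have := h (some ⟨1, by norm_num⟩) none
    simp only [Fm, QFm, dM] at this
    norm_num at this
    linarith
end

section
/- Let M be an ultrametric space with base point 0, q ∈ (0,1), and suppose x ∈ M has approximation sequence (x_k)_{k=0}^{m} (m finite or infinite) where x_k = φ_{n_k}(x), the n_k being the indices where the nearest-point approximations φ_n(x) change, so that q^{n_{k+1}} ≤ d(x_k, x) < q^{n_{k+1} - 1} for 0 ≤ k < m. Then for all 0 ≤ K < m, ∑_{l=K}^{m} d(x_l, x) ≤ d(x_K, x)/(q(1−q)). -/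
/-- Geometric bound for the approximation sequence of `x`: if `(a k)` are the successive
nearest-point approximations of `x`, with change indices `n k` (strictly increasing in `ℤ`)
satisfying `q^{n (k+1)} ≤ d(a k, x) < q^{n (k+1) - 1}` for `k < m` and `a m = x`, then
for all `K < m`, `∑_{l=K}^{m} d(a l, x) ≤ d(a K, x) / (q (1 - q))`. -/
theorem approx_seq_geometric_sum_bound {M : Type*} [MetricSpace M]
    (hu : ∀ x y z : M, dist x y ≤ max (dist x z) (dist z y))
    (q : ℝ) (hq0 : 0 < q) (hq1 : q < 1)
    (x : M) (m : ℕ) (a : ℕ → M) (n : ℕ → ℤ) (hn : StrictMono n)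
    (hk : ∀ k < m, q ^ n (k + 1) ≤ dist (a k) x ∧ dist (a k) x < q ^ (n (k + 1) - 1))
    (ham : a m = x) :
    ∀ K < m, ∑ l ∈ Finset.Icc K m, dist (a l) x ≤ dist (a K) x / (q * (1 - q)) := by
  intro K hK
  have hqne : q ≠ 0 := ne_of_gt hq0
  have hmono : ∀ k d : ℕ, n k + d ≤ n (k + d) := by
    intro k d
    induction d with
    | zero => simp
    | succ d ih =>
      have h1 : n (k + d) < n (k + d + 1) := hn (Nat.lt_succ_self _)
      rw [show k + (d + 1) = k + d + 1 from rfl]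
      push_cast
      have := Int.add_one_le_iff.mpr h1
      omega
  -- pointwise bound
  have key : ∀ l ∈ Finset.Icc K m, dist (a l) x ≤ dist (a K) x * q ^ (l - K) / q := by
    intro l hl
    simp only [Finset.mem_Icc] at hl
    rcases eq_or_lt_of_le hl.2 with rfl | hlm
    · rw [ham, dist_self]
      positivity
    · have h1 : dist (a l) x < q ^ (n (l + 1) - 1) := (hk l hlm).2
      have h2 : q ^ n (K + 1) ≤ dist (a K) x := (hk K hK).1
      have h3 : n (K + 1) + ((l : ℤ) - K) ≤ n (l + 1) := by
        have h := hmono (K + 1) (l - K)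
        have he : K + 1 + (l - K) = l + 1 := by omega
        rw [he] at h
        have hc : ((l - K : ℕ) : ℤ) = (l : ℤ) - K := by
          have := hl.1; push_cast; omega
        omega
      have h4 : q ^ (n (l + 1) - 1) ≤ q ^ (n (K + 1) + ((l : ℤ) - K) - 1) :=
        zpow_le_zpow_right_of_le_one₀ hq0 hq1.le (by omega)
      have h5 : q ^ (n (K + 1) + ((l : ℤ) - K) - 1)
          = q ^ n (K + 1) * q ^ (l - K) / q := by
        rw [zpow_sub₀ hqne, zpow_add₀ hqne, zpow_one]
        congr 2
        rw [← zpow_natCast]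
        congr 1
        have := hl.1; push_cast; omega
      have hpos : 0 < q ^ (l - K) := pow_pos hq0 _
      calc dist (a l) x ≤ q ^ n (K + 1) * q ^ (l - K) / q := by
            rw [← h5]; exact le_of_lt (lt_of_lt_of_le h1 h4)
        _ ≤ dist (a K) x * q ^ (l - K) / q := by gcongr
  calc ∑ l ∈ Finset.Icc K m, dist (a l) x
      ≤ ∑ l ∈ Finset.Icc K m, dist (a K) x * q ^ (l - K) / q :=
        Finset.sum_le_sum key
    _ = dist (a K) x / q * ∑ i ∈ Finset.range (m + 1 - K), q ^ i := by
        rw [Finset.mul_sum, ← Finset.Ico_add_one_right_eq_Icc, Finset.sum_Ico_eq_sum_range]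
        refine Finset.sum_congr rfl fun i _ => ?_
        rw [Nat.add_sub_cancel_left]
        ring
    _ ≤ dist (a K) x / q * (1 / (1 - q)) := by
        have hd : 0 ≤ dist (a K) x / q := by positivity
        refine mul_le_mul_of_nonneg_left ?_ hd
        have hpow : 0 ≤ q ^ (m + 1 - K) := (pow_pos hq0 _).le
        have h1q : (0:ℝ) < 1 - q := by linarith
        rw [geom_sum_eq (ne_of_lt hq1) (m + 1 - K),
          show (q ^ (m + 1 - K) - 1) / (q - 1) = (1 - q ^ (m + 1 - K)) / (1 - q) by
            rw [← neg_div_neg_eq]; ring_nf]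
        gcongr
        linarith
    _ = dist (a K) x / (q * (1 - q)) := by
        field_simp
end
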